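/- For n ≥ 1, x > 0, and 0 ≤ β < 1, the Jain basis functions sum to one: ∑_{k=0}^∞ L_{n,k}^{(β)}(x) = 1, where L_{n,k}^{(β)}(x) = nx·(nx + kβ)^{k-1}/k! · e^{-(nx+kβ)}. -/

import Mathlib

/-- The Jain basis functions `L_{n,k}^{(β)}(x) = nx(nx+kβ)^{k-1}/k! · e^{-(nx+kβ)}`,
with the exponent `k-1` written as `(nx+kβ)^k/(nx+kβ)`, so the `k = 0` term is `e^{-nx}`. -/
noncomputable def jainL (n : ℕ) (β x : ℝ) (k : ℕ) : ℝ :=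
  n * x * ((n * x + k * β) ^ (k : ℕ) / (n * x + k * β)) / (Nat.factorial k) *
    Real.exp (-(n * x + k * β))

/-!
Abel's identity `∑ₖ C(m,k) α(α+kβ)^(k-1) (y-kβ)^(m-k) = (α+y)^m`, taken at `y = m`, makes the
quasi-binomial weights `C(m,k) α(α+kβ)^(k-1) (m-kβ)^(m-k) / (α+m)^m` a probability distribution
on `{0, …, m}`. Each weight is `α/(α+kβ)` times the binomial probability of `k` successes with
success probability `(α+kβ)/(α+m)`, so by the Poisson limit theorem it tends to the `k`-th Jain
term (with `α = nx`) as `m → ∞`. Abel's identity at `m - 1` bounds the mean of the weights by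
`α/(1-β)` uniformly in `m`; hence no mass escapes to infinity, and the partial sums of the Jain
series lie between `1 - α/((1-β)K)` and `1`.
-/

open Filter Finset Real Topology

noncomputable def abelPoly (x z : ℝ) : ℕ → ℝ
  | 0 => 1
  | k + 1 => x * (x + (k + 1) * z) ^ k

lemma abelPoly_nonneg {x z : ℝ} (hx : 0 ≤ x) (hz : 0 ≤ z) : ∀ k, 0 ≤ abelPoly x z k
  | 0 => zero_le_one
  | k + 1 => by simp only [abelPoly]; positivity

lemma abelPoly_eq_mul_pow_div {x z : ℝ} {k : ℕ} (h : x + k * z ≠ 0) :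
    abelPoly x z k = x * ((x + k * z) ^ k / (x + k * z)) := by
  cases k with
  | zero => simp_all [abelPoly]
  | succ k =>
    push_cast at h ⊢
    rw [abelPoly, pow_succ, mul_div_cancel_right₀ _ h]

lemma hasDerivAt_abelPoly_succ (z t : ℝ) (k : ℕ) :
    HasDerivAt (fun x ↦ abelPoly x z (k + 1)) ((k + 1) * abelPoly (t + z) z k) t := by
  cases k with
  | zero => simpa [abelPoly] using hasDerivAt_id' t
  | succ k =>
    have h := (hasDerivAt_id' t).mul
      (((hasDerivAt_id' t).add_const ((k + 1 + 1) * z)).fun_pow (k + 1))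
    simp only [abelPoly, Nat.cast_add, Nat.cast_one]
    refine h.congr_deriv ?_
    simp only [Nat.add_sub_cancel, pow_succ]
    push_cast
    ring

theorem sum_choose_mul_abelPoly (z : ℝ) (m : ℕ) (x y : ℝ) :
    ∑ k ∈ range (m + 1), m.choose k * abelPoly x z k * (y - k * z) ^ (m - k) = (x + y) ^ m := by
  induction m generalizing x y with
  | zero => simp [abelPoly]
  | succ m ih =>
    set F : ℝ → ℝ := fun x ↦
      ∑ k ∈ range (m + 2), (m + 1).choose k * abelPoly x z k * (y - k * z) ^ (m + 1 - k)
    have hF_eq : F = fun x ↦ y ^ (m + 1) + ∑ j ∈ range (m + 1),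
        ((m + 1).choose (j + 1) : ℝ) * abelPoly x z (j + 1) * (y - (j + 1 : ℕ) * z) ^ (m - j) := by
      funext x
      simp [F, sum_range_succ' _ (m + 1), abelPoly, add_comm]
    -- the derivative in `x` is `m + 1` times the sum of order `m` at `(x + z, y - z)`
    have hF : ∀ t, HasDerivAt F ((m + 1) * (t + y) ^ m) t := by
      intro t
      have hterm : ∀ j ∈ range (m + 1), HasDerivAt
          (fun x ↦ ((m + 1).choose (j + 1) : ℝ) * abelPoly x z (j + 1) *
            (y - (j + 1 : ℕ) * z) ^ (m - j))
          ((m + 1) * (m.choose j * abelPoly (t + z) z j * ((y - z) - j * z) ^ (m - j))) t := by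
        intro j _
        refine (((hasDerivAt_abelPoly_succ z t j).const_mul _).mul_const _).congr_deriv ?_
        have hchoose : ((m + 1 : ℕ) : ℝ) * (m.choose j : ℝ) =
            (m + 1).choose (j + 1) * (j + 1 : ℕ) := by
          exact_mod_cast Nat.add_one_mul_choose_eq m j
        push_cast at hchoose ⊢
        linear_combination (-abelPoly (t + z) z j * (y - z - j * z) ^ (m - j)) * hchoose
      have hsum := (HasDerivAt.fun_sum hterm).const_add (y ^ (m + 1))
      rw [← mul_sum, ih, add_add_sub_cancel] at hsum
      rwa [hF_eq]
    have hG : ∀ t, HasDerivAt (fun x ↦ (x + y) ^ (m + 1)) ((m + 1) * (t + y) ^ m) t := by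
      intro t
      refine (((hasDerivAt_id' t).add_const y).fun_pow (m + 1)).congr_deriv ?_
      simp
    have hF0 : F 0 = (0 + y) ^ (m + 1) := by
      simp [hF_eq, abelPoly]
    exact isOpen_univ.eqOn_of_deriv_eq isPreconnected_univ
      (fun t _ ↦ (hF t).differentiableAt.differentiableWithinAt)
      (fun t _ ↦ (hG t).differentiableAt.differentiableWithinAt)
      (fun t _ ↦ (hF t).deriv.trans (hG t).deriv.symm) (Set.mem_univ 0) hF0 (Set.mem_univ x)

noncomputable def generalizedPoisson (α β : ℝ) (k : ℕ) : ℝ :=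
  α * ((α + k * β) ^ k / (α + k * β)) / k.factorial * exp (-(α + k * β))

noncomputable def quasiBinomial (α β : ℝ) (m k : ℕ) : ℝ :=
  m.choose k * abelPoly α β k * (m - k * β) ^ (m - k) / (α + m) ^ m

section QuasiBinomial

variable {α β : ℝ}

lemma sum_range_quasiBinomial (hα : 0 < α) (m : ℕ) :
    ∑ k ∈ range (m + 1), quasiBinomial α β m k = 1 := by
  simp only [quasiBinomial, ← sum_div, sum_choose_mul_abelPoly]
  exact div_self (by positivity)

lemma quasiBinomial_of_lt {m k : ℕ} (h : m < k) : quasiBinomial α β m k = 0 := by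
  simp [quasiBinomial, Nat.choose_eq_zero_of_lt h]

lemma quasiBinomial_nonneg (hα : 0 ≤ α) (hβ0 : 0 ≤ β) (hβ1 : β ≤ 1) (m k : ℕ) :
    0 ≤ quasiBinomial α β m k := by
  rcases le_or_gt k m with hkm | hkm
  · have hkβ : (k : ℝ) * β ≤ m :=
      (mul_le_of_le_one_right k.cast_nonneg hβ1).trans (by exact_mod_cast hkm)
    have := abelPoly_nonneg hα hβ0 k
    have := sub_nonneg.2 hkβ
    unfold quasiBinomial
    positivity
  · rw [quasiBinomial_of_lt hkm]

lemma sum_range_quasiBinomial_le_one (hα : 0 < α) (hβ0 : 0 ≤ β) (hβ1 : β ≤ 1) (m N : ℕ) :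
    ∑ k ∈ range N, quasiBinomial α β m k ≤ 1 :=
  calc ∑ k ∈ range N, quasiBinomial α β m k
      ≤ ∑ k ∈ range (max N (m + 1)), quasiBinomial α β m k :=
        sum_le_sum_of_subset_of_nonneg (range_subset_range.2 (le_max_left _ _))
          fun k _ _ ↦ quasiBinomial_nonneg hα.le hβ0 hβ1 m k
    _ = ∑ k ∈ range (m + 1), quasiBinomial α β m k :=
        (sum_subset (range_subset_range.2 (le_max_right _ _))
          fun _ _ hk ↦ quasiBinomial_of_lt (by simpa using hk)).symm
    _ = 1 := sum_range_quasiBinomial hα m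

/-- Summed over `k`, the right-hand side is `(M + 1) α (α + M + 1)^M` by Abel's identity of
orders `M + 1` and `M`, since `(M + 1 - k) C(M+1,k) = (M + 1) C(M,k)`. -/
lemma mul_choose_mul_abelPoly_le (hα : 0 ≤ α) (hβ0 : 0 ≤ β) (hβ1 : β ≤ 1) {M k : ℕ}
    (hk : k ≤ M + 1) :
    (1 - β) * k * ((M + 1).choose k * abelPoly α β k * (M + 1 - k * β) ^ (M + 1 - k)) ≤
      (M + 1) * ((M + 1).choose k * abelPoly α β k * (M + 1 - k * β) ^ (M + 1 - k) -
        (M + 1) * (M.choose k * abelPoly α β k * (M + 1 - k * β) ^ (M - k))) := by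
  have hA := abelPoly_nonneg hα hβ0 k
  rcases hk.lt_or_eq with hk | rfl
  · have hkM : k ≤ M := Nat.lt_succ_iff.1 hk
    have hkβ : (k : ℝ) * β ≤ M + 1 :=
      (mul_le_of_le_one_right k.cast_nonneg hβ1).trans (by exact_mod_cast hk.le)
    have hP : 0 ≤ ((M + 1).choose k : ℝ) * abelPoly α β k * (M + 1 - k * β) ^ (M - k) := by
      have := sub_nonneg.2 hkβ
      positivity
    have hpow : ((M : ℝ) + 1 - k * β) ^ (M + 1 - k) =
        (M + 1 - k * β) ^ (M - k) * (M + 1 - k * β) := by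
      rw [Nat.sub_add_comm hkM, pow_succ]
    have hchoose : (M.choose k : ℝ) * (M + 1) = (M + 1).choose k * (M + 1 - k) := by
      have h := congrArg (Nat.cast (R := ℝ)) (Nat.choose_mul_succ_eq M k)
      push_cast [Nat.cast_sub hk.le] at h
      exact h
    rw [hpow]
    calc (1 - β) * k *
          ((M + 1).choose k * abelPoly α β k * ((M + 1 - k * β) ^ (M - k) * (M + 1 - k * β)))
        = (1 - β) * k * ((M + 1).choose k * abelPoly α β k * (M + 1 - k * β) ^ (M - k)) *
            (M + 1 - k * β) := by ring
      _ ≤ (1 - β) * k * ((M + 1).choose k * abelPoly α β k * (M + 1 - k * β) ^ (M - k)) *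
            (M + 1) := by
        refine mul_le_mul_of_nonneg_left ?_
          (mul_nonneg (mul_nonneg (sub_nonneg.2 hβ1) k.cast_nonneg) hP)
        have : 0 ≤ (k : ℝ) * β := by positivity
        linarith
      _ = _ := by
        linear_combination ((M + 1) * abelPoly α β k * (M + 1 - k * β) ^ (M - k)) * hchoose
  · simp
    nlinarith [mul_nonneg (mul_nonneg hβ0 (M.cast_nonneg (α := ℝ))) hA]

lemma mul_sum_range_mul_quasiBinomial_le (hα : 0 < α) (hβ0 : 0 ≤ β) (hβ1 : β ≤ 1) (m : ℕ) :
    (1 - β) * ∑ k ∈ range (m + 1), k * quasiBinomial α β m k ≤ α := by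
  cases m with
  | zero => simpa using hα.le
  | succ M =>
    have hfull := sum_choose_mul_abelPoly β (M + 1) α (M + 1)
    have hprev : ∑ k ∈ range (M + 2),
        (M.choose k : ℝ) * abelPoly α β k * (M + 1 - k * β) ^ (M - k) = (α + (M + 1)) ^ M := by
      rw [sum_range_succ, Nat.choose_succ_self, ← sum_choose_mul_abelPoly β M α (M + 1)]
      simp
    have hnum : (1 - β) * ∑ k ∈ range (M + 2),
          k * ((M + 1).choose k * abelPoly α β k * (M + 1 - k * β) ^ (M + 1 - k))
        ≤ (M + 1) * α * (α + (M + 1)) ^ M :=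
      calc _ = ∑ k ∈ range (M + 2), (1 - β) * k *
            ((M + 1).choose k * abelPoly α β k * (M + 1 - k * β) ^ (M + 1 - k)) := by
            rw [mul_sum]
            simp only [mul_assoc]
        _ ≤ ∑ k ∈ range (M + 2), (M + 1) *
            ((M + 1).choose k * abelPoly α β k * (M + 1 - k * β) ^ (M + 1 - k) -
              (M + 1) * (M.choose k * abelPoly α β k * (M + 1 - k * β) ^ (M - k))) :=
            sum_le_sum fun k hk ↦
              mul_choose_mul_abelPoly_le hα.le hβ0 hβ1 (Nat.lt_succ_iff.1 (mem_range.1 hk))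
        _ = (M + 1) * ((α + (M + 1)) ^ (M + 1) - (M + 1) * (α + (M + 1)) ^ M) := by
            rw [← mul_sum, sum_sub_distrib, ← mul_sum, hprev, hfull]
        _ = (M + 1) * α * (α + (M + 1)) ^ M := by ring
    have hq : ∑ k ∈ range (M + 2), k * quasiBinomial α β (M + 1) k = (∑ k ∈ range (M + 2),
        k * ((M + 1).choose k * abelPoly α β k * (M + 1 - k * β) ^ (M + 1 - k))) /
          (α + (M + 1)) ^ (M + 1) := by
      rw [sum_div]
      refine sum_congr rfl fun k _ ↦ ?_
      simp only [quasiBinomial]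
      push_cast
      ring
    rw [hq, ← mul_div_assoc, div_le_iff₀ (by positivity), pow_succ]
    refine hnum.trans ?_
    have : 0 ≤ α * (α + (M + 1)) ^ M := by positivity
    nlinarith

lemma one_sub_div_le_sum_range_quasiBinomial (hα : 0 < α) (hβ0 : 0 ≤ β) (hβ1 : β < 1) (m : ℕ)
    {K : ℕ} (hK : 0 < K) :
    1 - α / ((1 - β) * K) ≤ ∑ k ∈ range K, quasiBinomial α β m k := by
  have hq := quasiBinomial_nonneg hα.le hβ0 hβ1.le m
  have hK' : (0 : ℝ) < K := by exact_mod_cast hK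
  have hsplit := sum_filter_add_sum_filter_not (range (m + 1)) (· < K) (quasiBinomial α β m)
  rw [sum_range_quasiBinomial hα m] at hsplit
  have hhead : ∑ k ∈ (range (m + 1)).filter (· < K), quasiBinomial α β m k
      ≤ ∑ k ∈ range K, quasiBinomial α β m k :=
    sum_le_sum_of_subset_of_nonneg (fun k hk ↦ by simp_all) fun k _ _ ↦ hq k
  -- Markov's inequality
  have htail : ∑ k ∈ (range (m + 1)).filter (¬ · < K), quasiBinomial α β m k
      ≤ α / ((1 - β) * K) :=
    calc _ ≤ ∑ k ∈ (range (m + 1)).filter (¬ · < K), k / K * quasiBinomial α β m k :=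
          sum_le_sum fun k hk ↦ le_mul_of_one_le_left (hq k) <| (one_le_div hK').2 <| by
            simp only [mem_filter, not_lt] at hk
            exact_mod_cast hk.2
      _ ≤ ∑ k ∈ range (m + 1), k / K * quasiBinomial α β m k :=
          sum_le_sum_of_subset_of_nonneg (filter_subset _ _)
            fun k _ _ ↦ mul_nonneg (by positivity) (hq k)
      _ = (∑ k ∈ range (m + 1), k * quasiBinomial α β m k) / K := by
          rw [sum_div]
          exact sum_congr rfl fun k _ ↦ div_mul_eq_mul_div _ _ _
      _ ≤ α / ((1 - β) * K) := by
          rw [← div_div]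
          gcongr
          rw [le_div_iff₀ (sub_pos.2 hβ1), mul_comm]
          exact mul_sum_range_mul_quasiBinomial_le hα hβ0 hβ1.le m
  linarith

lemma tendsto_quasiBinomial (hα : 0 < α) (hβ0 : 0 ≤ β) (k : ℕ) :
    Tendsto (fun m ↦ quasiBinomial α β m k) atTop (𝓝 (generalizedPoisson α β k)) := by
  set r := α + k * β
  have hr : 0 < r := by positivity
  have hp : Tendsto (fun m : ℕ ↦ m * (r / (α + m))) atTop (𝓝 r) := by
    convert (tendsto_natCast_div_add_atTop α).const_mul r using 2 with m
    · ring_nf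
    · simp
  have hlim :=
    (ProbabilityTheory.tendsto_choose_mul_pow_of_tendsto_mul_atTop k hp).const_mul (α / r)
  rw [show α / r * (exp (-r) * r ^ k / k.factorial) = generalizedPoisson α β k by
    unfold generalizedPoisson; ring] at hlim
  refine hlim.congr' ?_
  filter_upwards [eventually_ge_atTop k] with m hkm
  have hαm : 0 < α + m := by positivity
  have hsub : 1 - r / (α + m) = (m - k * β) / (α + m) := by
    field_simp
    ring
  have hpow : (α + m) ^ m = (α + m) ^ k * (α + m) ^ (m - k) := by
    rw [← pow_add, Nat.add_sub_cancel' hkm]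
  rw [quasiBinomial, abelPoly_eq_mul_pow_div hr.ne', hsub, hpow, div_pow, div_pow]
  field_simp
  simp only [r]
  ring

end QuasiBinomial

theorem hasSum_generalizedPoisson {α β : ℝ} (hα : 0 < α) (hβ0 : 0 ≤ β) (hβ1 : β < 1) :
    HasSum (generalizedPoisson α β) 1 := by
  have hpartial : ∀ K, Tendsto (fun m ↦ ∑ k ∈ range K, quasiBinomial α β m k) atTop
      (𝓝 (∑ k ∈ range K, generalizedPoisson α β k)) :=
    fun K ↦ tendsto_finsetSum _ fun k _ ↦ tendsto_quasiBinomial hα hβ0 k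
  have hupper : ∀ K, ∑ k ∈ range K, generalizedPoisson α β k ≤ 1 := fun K ↦
    le_of_tendsto' (hpartial K) fun m ↦ sum_range_quasiBinomial_le_one hα hβ0 hβ1.le m K
  have hlower : ∀ K, 0 < K → 1 - α / ((1 - β) * K) ≤ ∑ k ∈ range K, generalizedPoisson α β k :=
    fun K hK ↦ ge_of_tendsto' (hpartial K) fun m ↦
      one_sub_div_le_sum_range_quasiBinomial hα hβ0 hβ1 m hK
  have hbound : Tendsto (fun K : ℕ ↦ 1 - α / ((1 - β) * K)) atTop (𝓝 1) := by
    simpa [div_div] using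
      tendsto_const_nhds.sub (tendsto_const_div_atTop_nhds_zero_nat (α / (1 - β)))
  rw [hasSum_iff_tendsto_nat_of_nonneg (fun k ↦ by unfold generalizedPoisson; positivity)]
  exact tendsto_of_tendsto_of_tendsto_of_le_of_le' hbound tendsto_const_nhds
    ((eventually_gt_atTop 0).mono hlower) (Eventually.of_forall hupper)

theorem jain_partition_of_unity (n : ℕ) (hn : 1 ≤ n) (x β : ℝ)
    (hx : 0 < x) (hβ0 : 0 ≤ β) (hβ1 : β < 1) :
    HasSum (fun k : ℕ => jainL n β x k) 1 :=
  hasSum_generalizedPoisson (mul_pos (Nat.cast_pos.2 hn) hx) hβ0 hβ1
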